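/- Assume additionally that w and q are continuously differentiable on [r₁,∞), and let Z : ℝ → ℂ be a C¹ function with compact support contained in (λ₁,∞). Define on Ω_c the phase K₁(t,r) = ∫_{r₁}^r w(s)·√(2(λ_c(t,r)−q(s))) ds − t·λ_c(t,r), the local propagation speed b̂(t,r) = w(r)^{−1}·√(2(λ_c(t,r)−q(r))), and the WKB wave u(t,r) = e^{i·K₁(t,r)}·(∂_rλ_c(t,r))^{1/2}·Z(λ_c(t,r)). Then u is continuously differentiable on Ω_c and satisfies the transport equation ∂_t u + b̂·∂_r u + (1/2)·(∂_r b̂)·u = i·(λ_c − 2·q(r))·u on Ω_c. (This is the fixed-angular-variable form of the evolution identity (3.20) for the comparison dynamics U₀^± in the paper's Lemma 3.3, obtained from the computations (3.23)–(3.25).) -/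

import Mathlib

/-!
Differentiating `T(λ_c, r) = t` gives `H ∂_t λ_c = -1` and `H ∂_r λ_c = w(r) / √(2(λ_c - q(r)))`,
where `H = ∫_{r₁}^r w (2(λ_c - q))^{-3/2} > 0` is `-∂_λ T`; hence `λ_c` is transported by `b̂`,
`∂_t λ_c + b̂ ∂_r λ_c = 0`. The phase `K₁` is stationary in `λ` at `λ = λ_c`, so
`∂_t K₁ = -λ_c`, `∂_r K₁ = w √(2(λ_c - q))` and `∂_t K₁ + b̂ ∂_r K₁ = λ_c - 2q`.
Finally `D = ∂_r λ_c = ψ(λ_c, r)` for an explicit `C¹` function `ψ`. In `∂_t D + b̂ ∂_r D` the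
unknown `∂_λ ψ` only appears multiplied by `∂_t λ_c + b̂ ∂_r λ_c = 0`, and computing `∂_r ψ`
gives the continuity equation `∂_t D + ∂_r (b̂ D) = 0`. The product rule applied to
`u = e^{iK₁} √D Z(λ_c)` combines the three equations into the transport equation.
-/

open MeasureTheory

section

open Set Filter Topology intervalIntegral ContinuousLinearMap Function

theorem contDiffOn_one_of_hasFDerivAt {𝕜 E F : Type*} [NontriviallyNormedField 𝕜]
    [NormedAddCommGroup E] [NormedSpace 𝕜 E] [NormedAddCommGroup F] [NormedSpace 𝕜 F]
    {f : E → F} {f' : E → E →L[𝕜] F} {s : Set E} (hs : IsOpen s)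
    (hf : ∀ x ∈ s, HasFDerivAt f (f' x) x) (hf' : ContinuousOn f' s) :
    ContDiffOn 𝕜 1 f s := fun _ hx =>
  (contDiffAt_one_iff.2 ⟨f', s, hs.mem_nhds hx, hf', hf⟩).contDiffWithinAt

theorem contDiffOn_one_of_hasDerivAt {𝕜 F : Type*} [NontriviallyNormedField 𝕜]
    [NormedAddCommGroup F] [NormedSpace 𝕜 F] {f f' : 𝕜 → F} {s : Set 𝕜} (hs : IsOpen s)
    (hf : ∀ x ∈ s, HasDerivAt f (f' x) x) (hf' : ContinuousOn f' s) : ContDiffOn 𝕜 1 f s :=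
  contDiffOn_one_of_hasFDerivAt hs (fun x hx => (hf x hx).hasFDerivAt)
    ((smulRightL 𝕜 𝕜 F (1 : 𝕜 →L[𝕜] 𝕜)).continuous.comp_continuousOn hf')

noncomputable def momentum (x : ℝ) : ℝ := √(2 * x)

theorem momentum_pos {x : ℝ} (hx : 0 < x) : 0 < momentum x := Real.sqrt_pos.2 (by linarith)

theorem momentum_sq {x : ℝ} (hx : 0 ≤ x) : momentum x ^ 2 = 2 * x := Real.sq_sqrt (by linarith)

theorem hasDerivAt_momentum {x : ℝ} (hx : 0 < x) : HasDerivAt momentum (momentum x)⁻¹ x := by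
  have h := ((hasDerivAt_id x).const_mul 2).sqrt (by positivity : (2 : ℝ) * x ≠ 0)
  refine h.congr_deriv ?_
  simp only [momentum, mul_one, id]
  field_simp

theorem hasDerivAt_momentum_zpow (k : ℤ) {x : ℝ} (hx : 0 < x) :
    HasDerivAt (fun x => momentum x ^ k) (k * momentum x ^ (k - 2)) x := by
  have hρ := (momentum_pos hx).ne'
  refine ((hasDerivAt_zpow k _ (Or.inl hρ)).comp x (hasDerivAt_momentum hx)).congr_deriv ?_
  rw [show k - 2 = k - 1 - 1 by ring, zpow_sub_one₀ hρ (k - 1)]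
  ring

theorem contDiffOn_momentum_zpow (k : ℤ) : ContDiffOn ℝ 1 (fun x => momentum x ^ k) (Ioi 0) :=
  contDiffOn_one_of_hasDerivAt isOpen_Ioi (fun _ hx => hasDerivAt_momentum_zpow k hx)
    (continuousOn_const.mul fun _ hx =>
      (hasDerivAt_momentum_zpow (k - 2) hx).continuousAt.continuousWithinAt)

theorem hasDerivAt_intervalIntegral_of_continuousOn {E : Type*} [NormedAddCommGroup E]
    [NormedSpace ℝ E] {F F' : ℝ → ℝ → E} {U : Set ℝ} {a b x₀ : ℝ}
    (hU : IsOpen U) (hx₀ : x₀ ∈ U) (hF : ContinuousOn (uncurry F) (U ×ˢ uIcc a b))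
    (hF' : ContinuousOn (uncurry F') (U ×ˢ uIcc a b))
    (hderiv : ∀ x ∈ U, ∀ s ∈ uIcc a b, HasDerivAt (F · s) (F' x s) x) :
    HasDerivAt (fun x => ∫ s in a..b, F x s) (∫ s in a..b, F' x₀ s) x₀ := by
  have hFx : ∀ x ∈ U, ContinuousOn (F x) (uIcc a b) := fun x hx =>
    hF.comp (Continuous.prodMk_right x).continuousOn fun s hs => ⟨hx, hs⟩
  obtain ⟨ε, hε, hεU⟩ := Metric.nhds_basis_closedBall.mem_iff.1 (hU.mem_nhds hx₀)
  obtain ⟨M, hM⟩ := (isCompact_closedBall x₀ ε).prod isCompact_uIcc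
    |>.exists_bound_of_continuousOn (hF'.mono (prod_mono hεU subset_rfl))
  refine (hasDerivAt_integral_of_dominated_loc_of_deriv_le (bound := fun _ => M)
    (Metric.ball_mem_nhds x₀ hε) ?_ ((hFx x₀ hx₀).intervalIntegrable) ?_ ?_
    intervalIntegrable_const ?_).2
  · filter_upwards [hU.mem_nhds hx₀] with x hx
    exact ((hFx x hx).mono uIoc_subset_uIcc).aestronglyMeasurable measurableSet_uIoc
  · exact ((hF'.comp (Continuous.prodMk_right x₀).continuousOn fun s hs => ⟨hx₀, hs⟩).mono
      uIoc_subset_uIcc).aestronglyMeasurable measurableSet_uIoc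
  · exact Eventually.of_forall fun s hs x hx =>
      hM (x, s) ⟨Metric.ball_subset_closedBall hx, uIoc_subset_uIcc hs⟩
  · exact Eventually.of_forall fun s hs x hx =>
      hderiv x (hεU (Metric.ball_subset_closedBall hx)) s (uIoc_subset_uIcc hs)

theorem eventually_uIcc_snd {X : Type*} [PseudoMetricSpace X] {P : X × ℝ → Prop} {x₀ : X}
    {b₀ : ℝ} (h : ∀ᶠ p in 𝓝 (x₀, b₀), P p) :
    ∀ᶠ p in 𝓝 (x₀, b₀), ∀ s ∈ uIcc b₀ p.2, P (p.1, s) := by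
  obtain ⟨δ, hδ, hP⟩ := Metric.eventually_nhds_iff.1 h
  filter_upwards [Metric.ball_mem_nhds _ hδ] with p hp s hs
  refine hP (lt_of_le_of_lt ?_ hp)
  rw [Prod.dist_eq, Prod.dist_eq, dist_comm s, dist_comm p.2]
  exact max_le_max le_rfl (Real.dist_left_le_of_mem_uIcc hs)

theorem eventually_intervalIntegrable_of_continuousAt {X E : Type*} [PseudoMetricSpace X]
    [NormedAddCommGroup E] {F : X → ℝ → E} {x₀ : X} {b₀ : ℝ}
    (hF : ∀ᶠ p in 𝓝 (x₀, b₀), ContinuousAt (uncurry F) p) :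
    ∀ᶠ p in 𝓝 (x₀, b₀), IntervalIntegrable (F p.1) volume b₀ p.2 := by
  filter_upwards [eventually_uIcc_snd hF] with p hp
  exact ContinuousOn.intervalIntegrable fun s hs =>
    ((hp s hs).comp (Continuous.prodMk_right p.1).continuousAt).continuousWithinAt

theorem hasFDerivAt_intervalIntegral_snd {F : ℝ → ℝ → ℝ} {x₀ b₀ : ℝ}
    (hF : ∀ᶠ p in 𝓝 (x₀, b₀), ContinuousAt (uncurry F) p) :
    HasFDerivAt (fun p : ℝ × ℝ => ∫ s in b₀..p.2, F p.1 s) (F x₀ b₀ • snd ℝ ℝ ℝ) (x₀, b₀) := by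
  rw [hasFDerivAt_iff_isLittleO, Asymptotics.isLittleO_iff]
  intro c hc
  have hnear : ∀ᶠ p in 𝓝 (x₀, b₀), dist (uncurry F p) (F x₀ b₀) < c :=
    hF.self_of_nhds.eventually (Metric.ball_mem_nhds _ hc)
  filter_upwards [eventually_uIcc_snd hnear, eventually_intervalIntegrable_of_continuousAt hF]
    with ⟨x, y⟩ hxy hint
  calc ‖(∫ s in b₀..y, F x s) - (∫ s in b₀..b₀, F x₀ s) - (F x₀ b₀ • snd ℝ ℝ ℝ) ((x, y) - (x₀, b₀))‖
      = ‖∫ s in b₀..y, (F x s - F x₀ b₀)‖ := by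
        rw [integral_sub hint intervalIntegrable_const]
        simp [mul_comm]
    _ ≤ c * |y - b₀| := norm_integral_le_of_norm_le_const fun s hs =>
        (dist_eq_norm (F x s) _ ▸ hxy s (uIoc_subset_uIcc hs)).le
    _ ≤ c * ‖(x, y) - (x₀, b₀)‖ := by
        gcongr
        exact le_max_right |x - x₀| |y - b₀|

theorem hasFDerivAt_parametric_primitive {F : ℝ → ℝ → ℝ} {a x₀ b₀ L : ℝ}
    (hF : ∀ᶠ p in 𝓝 (x₀, b₀), ContinuousAt (uncurry F) p)
    (hint : ∀ᶠ x in 𝓝 x₀, IntervalIntegrable (F x) volume a b₀)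
    (hL : HasDerivAt (fun x => ∫ s in a..b₀, F x s) L x₀) :
    HasFDerivAt (fun p : ℝ × ℝ => ∫ s in a..p.2, F p.1 s)
      (L • fst ℝ ℝ ℝ + F x₀ b₀ • snd ℝ ℝ ℝ) (x₀, b₀) := by
  refine ((hL.comp_hasFDerivAt (x₀, b₀) hasFDerivAt_fst).add
    (hasFDerivAt_intervalIntegral_snd hF)).congr_of_eventuallyEq ?_
  filter_upwards [eventually_intervalIntegrable_of_continuousAt hF,
    continuousAt_fst.eventually hint] with p hp hpa
  exact (integral_add_adjacent_intervals hpa hp).symm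

/-- `momentumIntegral w q r₁ k (λ, r) = ∫_{r₁}^r w(s) (2(λ - q s))^{k/2} ds`: `k = -1` is the
travel time `T(λ, r)`, `k = 1` the action term of `K₁`, and `∂_λ` lowers `k` by `2`. -/
noncomputable def momentumIntegral (w q : ℝ → ℝ) (r₁ : ℝ) (k : ℤ) (p : ℝ × ℝ) : ℝ :=
  ∫ s in r₁..p.2, w s * momentum (p.1 - q s) ^ k

section MomentumIntegral

variable {w q : ℝ → ℝ} {a r₁ : ℝ}

theorem continuousOn_momentum_integrand (hw : ContinuousOn w (Ici r₁))
    (hq : ContinuousOn q (Ici r₁)) (hqa : ∀ s, r₁ ≤ s → q s ≤ a) (k : ℤ) :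
    ContinuousOn (uncurry fun x s => w s * momentum (x - q s) ^ k) (Ioi a ×ˢ Ici r₁) := by
  refine (hw.comp continuousOn_snd mapsTo_snd_prod).mul
    ((contDiffOn_momentum_zpow k).continuousOn.comp
      (continuousOn_fst.sub (hq.comp continuousOn_snd mapsTo_snd_prod)) ?_)
  rintro ⟨x, s⟩ ⟨hx, hs⟩
  exact sub_pos.2 ((hqa s hs).trans_lt hx)

theorem hasFDerivAt_momentumIntegral (hw : ContinuousOn w (Ici r₁))
    (hq : ContinuousOn q (Ici r₁)) (hqa : ∀ s, r₁ ≤ s → q s ≤ a) (k : ℤ) {x r : ℝ}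
    (hx : a < x) (hr : r₁ < r) :
    HasFDerivAt (momentumIntegral w q r₁ k)
      ((k * momentumIntegral w q r₁ (k - 2) (x, r)) • fst ℝ ℝ ℝ
        + (w r * momentum (x - q r) ^ k) • snd ℝ ℝ ℝ) (x, r) := by
  have hsub : uIcc r₁ r ⊆ Ici r₁ := by
    rw [uIcc_of_le hr.le]
    exact Icc_subset_Ici_self
  have hF := continuousOn_momentum_integrand hw hq hqa k
  have hF' : ContinuousOn (uncurry fun y s => (k : ℝ) * (w s * momentum (y - q s) ^ (k - 2)))
      (Ioi a ×ˢ Ici r₁) :=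
    continuousOn_const.mul (continuousOn_momentum_integrand hw hq hqa (k - 2))
  have hderiv : ∀ y ∈ Ioi a, ∀ s ∈ uIcc r₁ r, HasDerivAt (fun y => w s * momentum (y - q s) ^ k)
      (k * (w s * momentum (y - q s) ^ (k - 2))) y := fun y hy s hs => by
    have hpos : 0 < y - q s := sub_pos.2 ((hqa s (hsub hs)).trans_lt hy)
    refine (((hasDerivAt_momentum_zpow k hpos).comp y
      ((hasDerivAt_id y).sub_const (q s))).const_mul (w s)).congr_deriv ?_
    simp only [mul_one]
    ring
  have hL := hasDerivAt_intervalIntegral_of_continuousOn isOpen_Ioi hx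
    (hF.mono (prod_mono subset_rfl hsub)) (hF'.mono (prod_mono subset_rfl hsub)) hderiv
  have hcont : ∀ᶠ p in 𝓝 (x, r), ContinuousAt (uncurry fun x s => w s * momentum (x - q s) ^ k) p :=
    (isOpen_Ioi.prod isOpen_Ioi).eventually_mem (show (x, r) ∈ Ioi a ×ˢ Ioi r₁ from ⟨hx, hr⟩)
      |>.mono fun p hp => hF.continuousAt (prod_mem_nhds (isOpen_Ioi.mem_nhds hp.1)
        (mem_of_superset (isOpen_Ioi.mem_nhds hp.2) Ioi_subset_Ici_self))
  have hint : ∀ᶠ y in 𝓝 x, IntervalIntegrable (fun s => w s * momentum (y - q s) ^ k) volume r₁ r :=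
    (isOpen_Ioi.eventually_mem hx).mono fun y hy => ContinuousOn.intervalIntegrable <|
      hF.comp (Continuous.prodMk_right y).continuousOn fun s hs => ⟨hy, hsub hs⟩
  have h := hasFDerivAt_parametric_primitive hcont hint hL
  rwa [intervalIntegral.integral_const_mul] at h

theorem continuousOn_momentumIntegral (hw : ContinuousOn w (Ici r₁))
    (hq : ContinuousOn q (Ici r₁)) (hqa : ∀ s, r₁ ≤ s → q s ≤ a) (k : ℤ) :
    ContinuousOn (momentumIntegral w q r₁ k) (Ioi a ×ˢ Ioi r₁) := fun _ hp =>
  (hasFDerivAt_momentumIntegral hw hq hqa k hp.1 hp.2).continuousAt.continuousWithinAt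

theorem contDiffOn_momentumIntegral (hw : ContinuousOn w (Ici r₁))
    (hq : ContinuousOn q (Ici r₁)) (hqa : ∀ s, r₁ ≤ s → q s ≤ a) (k : ℤ) :
    ContDiffOn ℝ 1 (momentumIntegral w q r₁ k) (Ioi a ×ˢ Ioi r₁) :=
  contDiffOn_one_of_hasFDerivAt (isOpen_Ioi.prod isOpen_Ioi)
    (fun _ hp => hasFDerivAt_momentumIntegral hw hq hqa k hp.1 hp.2)
    (((continuousOn_const.mul (continuousOn_momentumIntegral hw hq hqa (k - 2))).smul
      continuousOn_const).add
      (((continuousOn_momentum_integrand hw hq hqa k).mono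
        (prod_mono subset_rfl Ioi_subset_Ici_self)).smul continuousOn_const))

theorem momentumIntegral_pos (hw : ContinuousOn w (Ici r₁))
    (hq : ContinuousOn q (Ici r₁)) (hqa : ∀ s, r₁ ≤ s → q s ≤ a)
    (hwpos : ∀ s, r₁ ≤ s → 0 < w s) (k : ℤ) {x r : ℝ} (hx : a < x) (hr : r₁ < r) :
    0 < momentumIntegral w q r₁ k (x, r) := by
  refine intervalIntegral_pos_of_pos_on ?_ (fun s hs => ?_) hr
  · exact ContinuousOn.intervalIntegrable <| (continuousOn_momentum_integrand hw hq hqa k).comp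
      (Continuous.prodMk_right x).continuousOn fun s hs => ⟨hx, by
        rw [uIcc_of_le hr.le] at hs; exact hs.1⟩
  · exact mul_pos (hwpos s hs.1.le)
      (zpow_pos (momentum_pos (sub_pos.2 ((hqa s hs.1.le).trans_lt hx))) k)

end MomentumIntegral

theorem HasFDerivAt.hasDerivAt_comp_prodMk {G : ℝ × ℝ → ℝ} {A B x f' g' : ℝ} {f g : ℝ → ℝ}
    (hG : HasFDerivAt G (A • fst ℝ ℝ ℝ + B • snd ℝ ℝ ℝ) (f x, g x))
    (hf : HasDerivAt f f' x) (hg : HasDerivAt g g' x) :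
    HasDerivAt (fun y => G (f y, g y)) (A * f' + B * g') x := by
  have h := hG.comp_hasDerivAt x (hf.prodMk hg)
  rwa [show (A • fst ℝ ℝ ℝ + B • snd ℝ ℝ ℝ) (f', g') = A * f' + B * g' by simp] at h

section StationaryPoint

variable {G : ℝ × ℝ → ℝ} {Λ D : ℝ → ℝ → ℝ} {t r A B Λt Λr : ℝ}

theorem HasFDerivAt.hasDerivAt_partials_of_eventuallyEq
    (hG : HasFDerivAt G (A • fst ℝ ℝ ℝ + B • snd ℝ ℝ ℝ) (Λ t r, r))
    (ht : HasDerivAt (Λ · r) Λt t) (hr : HasDerivAt (Λ t ·) Λr r)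
    (hD : ∀ᶠ p in 𝓝 (t, r), D p.1 p.2 = G (Λ p.1 p.2, p.2)) :
    HasDerivAt (D · r) (A * Λt) t ∧ HasDerivAt (D t ·) (A * Λr + B) r := by
  constructor
  · simpa using (hG.hasDerivAt_comp_prodMk ht (hasDerivAt_const t r)).congr_of_eventuallyEq
      ((Continuous.prodMk_left r).continuousAt.eventually hD)
  · simpa using (hG.hasDerivAt_comp_prodMk hr (hasDerivAt_id r)).congr_of_eventuallyEq
      ((Continuous.prodMk_right t).continuousAt.eventually hD)

theorem HasFDerivAt.partials_of_comp_eq_fst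
    (hG : HasFDerivAt G (A • fst ℝ ℝ ℝ + B • snd ℝ ℝ ℝ) (Λ t r, r))
    (ht : HasDerivAt (Λ · r) Λt t) (hr : HasDerivAt (Λ t ·) Λr r)
    (hinv : ∀ᶠ p in 𝓝 (t, r), G (Λ p.1 p.2, p.2) = p.1) :
    A * Λt = 1 ∧ A * Λr + B = 0 := by
  obtain ⟨h₁, h₂⟩ := hG.hasDerivAt_partials_of_eventuallyEq (D := fun t _ => t) ht hr
    (hinv.mono fun _ h => h.symm)
  exact ⟨h₁.unique (hasDerivAt_id t), h₂.unique (hasDerivAt_const r t)⟩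

/-- The `λ`-derivative of `G(λ, r) - tλ` vanishes at `λ = Λ t r`, so the variation of `Λ` does
not contribute to the partial derivatives of the phase. -/
theorem HasFDerivAt.hasDerivAt_stationary_phase
    (hG : HasFDerivAt G (t • fst ℝ ℝ ℝ + B • snd ℝ ℝ ℝ) (Λ t r, r))
    (ht : HasDerivAt (Λ · r) Λt t) (hr : HasDerivAt (Λ t ·) Λr r) :
    HasDerivAt (fun t' => G (Λ t' r, r) - t' * Λ t' r) (-Λ t r) t ∧
      HasDerivAt (fun r' => G (Λ t r', r') - t * Λ t r') B r := by
  constructor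
  · refine ((hG.hasDerivAt_comp_prodMk ht (hasDerivAt_const t r)).sub
      ((hasDerivAt_id t).mul ht)).congr_deriv ?_
    simp
  · refine ((hG.hasDerivAt_comp_prodMk hr (hasDerivAt_id r)).sub
      (hr.const_mul t)).congr_deriv ?_
    ring

end StationaryPoint

theorem ContinuousLinearMap.eq_smul_fst_add_smul_snd (L : ℝ × ℝ →L[ℝ] ℝ) :
    L = L (1, 0) • fst ℝ ℝ ℝ + L (0, 1) • snd ℝ ℝ ℝ := by
  ext <;> simp

/-- `∂_r λ_c` as a function of `(λ_c, r)`, obtained by differentiating `T(λ_c, r) = t` in `r`. -/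
noncomputable def wkbDensity (w q : ℝ → ℝ) (r₁ : ℝ) (p : ℝ × ℝ) : ℝ :=
  w p.2 * momentum (p.1 - q p.2) ^ (-1 : ℤ) / momentumIntegral w q r₁ (-3) p

section WKBDensity

variable {w q : ℝ → ℝ} {a r₁ : ℝ}

theorem contDiffOn_wkbDensity (hw : ContDiffOn ℝ 1 w (Ici r₁)) (hq : ContDiffOn ℝ 1 q (Ici r₁))
    (hqa : ∀ s, r₁ ≤ s → q s ≤ a) (hwpos : ∀ s, r₁ ≤ s → 0 < w s) :
    ContDiffOn ℝ 1 (wkbDensity w q r₁) (Ioi a ×ˢ Ioi r₁) := by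
  have hsnd : MapsTo Prod.snd (Ioi a ×ˢ Ioi r₁) (Ici r₁) := fun p hp => Ioi_subset_Ici_self hp.2
  refine ((hw.comp contDiff_snd.contDiffOn hsnd).mul ((contDiffOn_momentum_zpow (-1)).comp
    (contDiff_fst.contDiffOn.sub (hq.comp contDiff_snd.contDiffOn hsnd)) ?_)).div
    (contDiffOn_momentumIntegral hw.continuousOn hq.continuousOn hqa (-3)) fun p hp =>
      (momentumIntegral_pos hw.continuousOn hq.continuousOn hqa hwpos (-3) hp.1 hp.2).ne'
  rintro ⟨x, s⟩ ⟨hx, hs⟩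
  exact sub_pos.2 ((hqa s hs.le).trans_lt hx)

theorem hasDerivAt_wkbDensity_snd (hw : ContinuousOn w (Ici r₁)) (hq : ContinuousOn q (Ici r₁))
    (hqa : ∀ s, r₁ ≤ s → q s ≤ a) (hwpos : ∀ s, r₁ ≤ s → 0 < w s) {x r w' q' : ℝ}
    (hx : a < x) (hr : r₁ < r) (hw' : HasDerivAt w w' r) (hq' : HasDerivAt q q' r) :
    HasDerivAt (fun r' => wkbDensity w q r₁ (x, r'))
      (((w' * momentum (x - q r) ^ (-1 : ℤ) + w r * (momentum (x - q r) ^ (-3 : ℤ) * q'))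
          * momentumIntegral w q r₁ (-3) (x, r)
        - w r * momentum (x - q r) ^ (-1 : ℤ) * (w r * momentum (x - q r) ^ (-3 : ℤ)))
        / momentumIntegral w q r₁ (-3) (x, r) ^ 2) r := by
  have hpos : 0 < x - q r := sub_pos.2 ((hqa r hr.le).trans_lt hx)
  have hρ : HasDerivAt (fun r' => momentum (x - q r') ^ (-1 : ℤ))
      (momentum (x - q r) ^ (-3 : ℤ) * q') r := by
    refine ((hasDerivAt_momentum_zpow (-1) hpos).comp r (hq'.const_sub x)).congr_deriv ?_
    norm_num
  have hH : HasDerivAt (fun r' => momentumIntegral w q r₁ (-3) (x, r'))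
      (w r * momentum (x - q r) ^ (-3 : ℤ)) r := by
    simpa using (hasFDerivAt_momentumIntegral hw hq hqa (-3) hx hr).hasDerivAt_comp_prodMk
      (hasDerivAt_const r x) (hasDerivAt_id r)
  exact (hw'.mul hρ).div hH
    (momentumIntegral_pos hw hq hqa hwpos (-3) hx hr).ne'

end WKBDensity

open Complex in
theorem transport_of_wkb_ansatz {K Λ D : ℝ → ℝ → ℝ} {Z : ℝ → ℂ} {u : ℝ → ℝ → ℂ}
    {t r b b' V Kt Kr Λt Λr Dt Dr : ℝ} {Z' : ℂ}
    (hu : ∀ t r, u t r = cexp (I * K t r) * √(D t r) * Z (Λ t r))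
    (hKt : HasDerivAt (K · r) Kt t) (hKr : HasDerivAt (K t ·) Kr r)
    (hΛt : HasDerivAt (Λ · r) Λt t) (hΛr : HasDerivAt (Λ t ·) Λr r)
    (hDt : HasDerivAt (D · r) Dt t) (hDr : HasDerivAt (D t ·) Dr r)
    (hZ : HasDerivAt Z Z' (Λ t r)) (hD : 0 < D t r)
    (hphase : Kt + b * Kr = V) (hfreq : Λt + b * Λr = 0) (hdens : Dt + b * Dr + b' * D t r = 0) :
    deriv (u · r) t + b * deriv (u t ·) r + 1 / 2 * b' * u t r = I * V * u t r := by
  have hS : √(D t r) ≠ 0 := (Real.sqrt_pos.2 hD).ne'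
  obtain rfl : u = fun t r => cexp (I * K t r) * √(D t r) * Z (Λ t r) := funext₂ hu
  have ut : HasDerivAt (fun t' => cexp (I * K t' r) * (√(D t' r) : ℂ) * Z (Λ t' r)) _ t :=
    ((hKt.ofReal_comp.const_mul I).cexp.mul (hDt.sqrt hD.ne').ofReal_comp).mul (hZ.scomp t hΛt)
  have ur : HasDerivAt (fun r' => cexp (I * K t r') * (√(D t r') : ℂ) * Z (Λ t r')) _ r :=
    ((hKr.ofReal_comp.const_mul I).cexp.mul (hDr.sqrt hD.ne').ofReal_comp).mul (hZ.scomp r hΛr)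
  rw [ut.deriv, ur.deriv]
  have hphase' : (Kt : ℂ) + b * Kr = V := by exact_mod_cast hphase
  have hfreq' : (Λt : ℂ) + b * Λr = 0 := by exact_mod_cast hfreq
  have hdens' : (Dt : ℂ) + b * Dr + b' * (√(D t r) : ℂ) ^ 2 = 0 := by
    rw [← ofReal_pow, Real.sq_sqrt hD.le]
    exact_mod_cast hdens
  have hSS : (√(D t r) : ℂ) ^ 2 * (√(D t r) : ℂ)⁻¹ = √(D t r) := by
    rw [sq, mul_inv_cancel_right₀ (ofReal_ne_zero.2 hS)]
  simp only [Pi.mul_apply, real_smul]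
  push_cast
  set E := cexp (I * K t r)
  set S := (√(D t r) : ℂ)
  linear_combination (E * S * Z (Λ t r) * I) * hphase' + (E * Z (Λ t r) * (2 * S)⁻¹) * hdens'
    + (E * S * Z') * hfreq' - (1 / 2 * b' * E * Z (Λ t r)) * hSS

theorem DifferentiableAt.hasDerivAt_comp_prodMk_const {f : ℝ × ℝ → ℝ} {t r : ℝ}
    (h : DifferentiableAt ℝ f (t, r)) :
    HasDerivAt (fun t' => f (t', r)) (fderiv ℝ f (t, r) (1, 0)) t :=
  h.hasFDerivAt.comp_hasDerivAt t ((hasDerivAt_id t).prodMk (hasDerivAt_const t r))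

section WKB

variable {w q : ℝ → ℝ} {a r₁ : ℝ} {Λ D : ℝ → ℝ → ℝ} {t r Λt Λr : ℝ}

theorem momentumIntegral_mul_partials (hw : ContinuousOn w (Ici r₁))
    (hq : ContinuousOn q (Ici r₁)) (hqa : ∀ s, r₁ ≤ s → q s ≤ a) (hr : r₁ < r) (hΛa : a < Λ t r)
    (ht : HasDerivAt (Λ · r) Λt t) (hrd : HasDerivAt (Λ t ·) Λr r)
    (hinv : ∀ᶠ p in 𝓝 (t, r), momentumIntegral w q r₁ (-1) (Λ p.1 p.2, p.2) = p.1) :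
    momentumIntegral w q r₁ (-3) (Λ t r, r) * Λt = -1 ∧
      momentumIntegral w q r₁ (-3) (Λ t r, r) * Λr = w r * momentum (Λ t r - q r) ^ (-1 : ℤ) := by
  obtain ⟨h₁, h₂⟩ :=
    (hasFDerivAt_momentumIntegral hw hq hqa (-1) hΛa hr).partials_of_comp_eq_fst ht hrd hinv
  norm_num at h₁ h₂
  rw [zpow_neg_one]
  constructor <;> linarith

theorem eq_wkbDensity_of_hasDerivAt (hw : ContinuousOn w (Ici r₁))
    (hq : ContinuousOn q (Ici r₁)) (hqa : ∀ s, r₁ ≤ s → q s ≤ a) (hwpos : ∀ s, r₁ ≤ s → 0 < w s)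
    (hr : r₁ < r) (hΛa : a < Λ t r)
    (ht : HasDerivAt (Λ · r) Λt t) (hrd : HasDerivAt (Λ t ·) Λr r)
    (hinv : ∀ᶠ p in 𝓝 (t, r), momentumIntegral w q r₁ (-1) (Λ p.1 p.2, p.2) = p.1) :
    Λr = wkbDensity w q r₁ (Λ t r, r) := by
  rw [wkbDensity, eq_div_iff (momentumIntegral_pos hw hq hqa hwpos (-3) hΛa hr).ne', mul_comm]
  exact (momentumIntegral_mul_partials hw hq hqa hr hΛa ht hrd hinv).2

theorem wkb_frequency_transport (hw : ContinuousOn w (Ici r₁)) (hq : ContinuousOn q (Ici r₁))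
    (hqa : ∀ s, r₁ ≤ s → q s ≤ a) (hwpos : ∀ s, r₁ ≤ s → 0 < w s) {b : ℝ → ℝ → ℝ}
    (hr : r₁ < r) (hΛa : a < Λ t r)
    (ht : HasDerivAt (Λ · r) Λt t) (hrd : HasDerivAt (Λ t ·) Λr r)
    (hinv : ∀ᶠ p in 𝓝 (t, r), momentumIntegral w q r₁ (-1) (Λ p.1 p.2, p.2) = p.1)
    (hb : ∀ t r, b t r = (w r)⁻¹ * momentum (Λ t r - q r)) :
    Λt + b t r * Λr = 0 := by
  obtain ⟨hHt, hHr⟩ := momentumIntegral_mul_partials hw hq hqa hr hΛa ht hrd hinv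
  have hH := (momentumIntegral_pos hw hq hqa hwpos (-3) hΛa hr).ne'
  have hρ := (momentum_pos (sub_pos.2 ((hqa r hr.le).trans_lt hΛa))).ne'
  have hW := (hwpos r hr.le).ne'
  have hΛt : Λt = -1 / momentumIntegral w q r₁ (-3) (Λ t r, r) :=
    eq_div_of_mul_eq hH (by linear_combination hHt)
  have hΛr : Λr =
      w r * momentum (Λ t r - q r) ^ (-1 : ℤ) / momentumIntegral w q r₁ (-3) (Λ t r, r) :=
    eq_div_of_mul_eq hH (by linear_combination hHr)
  rw [hb, hΛt, hΛr, zpow_neg_one]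
  field_simp
  ring

theorem wkb_phase_partials (hw : ContinuousOn w (Ici r₁)) (hq : ContinuousOn q (Ici r₁))
    (hqa : ∀ s, r₁ ≤ s → q s ≤ a) {K : ℝ → ℝ → ℝ} (hr : r₁ < r) (hΛa : a < Λ t r)
    (ht : HasDerivAt (Λ · r) Λt t) (hrd : HasDerivAt (Λ t ·) Λr r)
    (hinv : ∀ᶠ p in 𝓝 (t, r), momentumIntegral w q r₁ (-1) (Λ p.1 p.2, p.2) = p.1)
    (hK : ∀ t r, K t r = momentumIntegral w q r₁ 1 (Λ t r, r) - t * Λ t r) :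
    HasDerivAt (K · r) (-Λ t r) t ∧ HasDerivAt (K t ·) (w r * momentum (Λ t r - q r)) r := by
  have hG : HasFDerivAt (momentumIntegral w q r₁ 1)
      (t • fst ℝ ℝ ℝ + (w r * momentum (Λ t r - q r)) • snd ℝ ℝ ℝ) (Λ t r, r) := by
    have h := hasFDerivAt_momentumIntegral hw hq hqa 1 hΛa hr
    norm_num [hinv.self_of_nhds] at h
    exact h
  simpa only [hK] using hG.hasDerivAt_stationary_phase ht hrd

theorem wkb_continuity_equation (hw : ContDiffOn ℝ 1 w (Ici r₁))
    (hq : ContDiffOn ℝ 1 q (Ici r₁)) (hqa : ∀ s, r₁ ≤ s → q s ≤ a)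
    (hwpos : ∀ s, r₁ ≤ s → 0 < w s) {b : ℝ → ℝ → ℝ} (hr : r₁ < r) (hΛa : a < Λ t r)
    (ht : HasDerivAt (Λ · r) Λt t) (hrd : HasDerivAt (Λ t ·) (D t r) r)
    (hinv : ∀ᶠ p in 𝓝 (t, r), momentumIntegral w q r₁ (-1) (Λ p.1 p.2, p.2) = p.1)
    (hDeq : ∀ᶠ p in 𝓝 (t, r), D p.1 p.2 = wkbDensity w q r₁ (Λ p.1 p.2, p.2))
    (hb : ∀ t r, b t r = (w r)⁻¹ * momentum (Λ t r - q r)) :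
    ∃ Dt Dr b', HasDerivAt (D · r) Dt t ∧ HasDerivAt (D t ·) Dr r ∧ HasDerivAt (b t ·) b' r ∧
      Dt + b t r * Dr + b' * D t r = 0 := by
  have hw' := ((hw.contDiffAt (Ici_mem_nhds hr)).differentiableAt one_ne_zero).hasDerivAt
  have hq' := ((hq.contDiffAt (Ici_mem_nhds hr)).differentiableAt one_ne_zero).hasDerivAt
  have hpos : 0 < Λ t r - q r := sub_pos.2 ((hqa r hr.le).trans_lt hΛa)
  have hρ := (momentum_pos hpos).ne'
  have hW := (hwpos r hr.le).ne'
  have hH := (momentumIntegral_pos hw.continuousOn hq.continuousOn hqa hwpos (-3) hΛa hr).ne'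
  have hψ := (((contDiffOn_wkbDensity hw hq hqa hwpos).contDiffAt
    ((isOpen_Ioi.prod isOpen_Ioi).mem_nhds (show (Λ t r, r) ∈ Ioi a ×ˢ Ioi r₁ from
      ⟨hΛa, hr⟩))).differentiableAt one_ne_zero).hasFDerivAt
  rw [ContinuousLinearMap.eq_smul_fst_add_smul_snd (fderiv ℝ _ _)] at hψ
  set ψΛ := fderiv ℝ (wkbDensity w q r₁) (Λ t r, r) (1, 0)
  set ψr := fderiv ℝ (wkbDensity w q r₁) (Λ t r, r) (0, 1)
  obtain ⟨hDt, hDr⟩ := hψ.hasDerivAt_partials_of_eventuallyEq ht hrd hDeq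
  have hψr := (hψ.hasDerivAt_comp_prodMk (hasDerivAt_const r (Λ t r)) (hasDerivAt_id r)).unique
    (hasDerivAt_wkbDensity_snd hw.continuousOn hq.continuousOn hqa hwpos hΛa hr hw' hq')
  have hb' : HasDerivAt (b t ·) (-(deriv w r) / w r ^ 2 * momentum (Λ t r - q r)
      + (w r)⁻¹ * ((momentum (Λ t r - q r))⁻¹ * (D t r - deriv q r))) r := by
    rw [show (b t ·) = fun r' => (w r')⁻¹ * momentum (Λ t r' - q r') from funext (hb t)]
    exact (hw'.inv hW).mul
      (HasDerivAt.comp (h₂ := momentum) r (hasDerivAt_momentum hpos) (hrd.sub hq'))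
  refine ⟨_, _, _, hDt, hDr, hb', ?_⟩
  have hfreq := wkb_frequency_transport hw.continuousOn hq.continuousOn hqa hwpos hr hΛa ht hrd
    hinv hb
  have hDH : D t r = w r * (momentum (Λ t r - q r))⁻¹ / momentumIntegral w q r₁ (-3) (Λ t r, r) :=
    hDeq.self_of_nhds.trans (by rw [wkbDensity, zpow_neg_one])
  simp only [mul_zero, mul_one, zero_add, zpow_neg, zpow_ofNat, pow_one] at hψr
  have h : b t r * ψr + (-(deriv w r) / w r ^ 2 * momentum (Λ t r - q r)
      + (w r)⁻¹ * ((momentum (Λ t r - q r))⁻¹ * (D t r - deriv q r))) * D t r = 0 := by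
    rw [hb, hDH, hψr]
    field_simp
    ring
  linear_combination ψΛ * hfreq + h

theorem wkb_transport_at (hw : ContDiffOn ℝ 1 w (Ici r₁)) (hq : ContDiffOn ℝ 1 q (Ici r₁))
    (hqa : ∀ s, r₁ ≤ s → q s ≤ a) (hwpos : ∀ s, r₁ ≤ s → 0 < w s)
    {K b : ℝ → ℝ → ℝ} {u : ℝ → ℝ → ℂ} {Z : ℝ → ℂ} (hr : r₁ < r) (hΛa : a < Λ t r)
    (hΛ : DifferentiableAt ℝ (fun p : ℝ × ℝ => Λ p.1 p.2) (t, r))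
    (hrd : HasDerivAt (Λ t ·) (D t r) r) (hD : 0 < D t r)
    (hinv : ∀ᶠ p in 𝓝 (t, r), momentumIntegral w q r₁ (-1) (Λ p.1 p.2, p.2) = p.1)
    (hDeq : ∀ᶠ p in 𝓝 (t, r), D p.1 p.2 = wkbDensity w q r₁ (Λ p.1 p.2, p.2))
    (hZ : DifferentiableAt ℝ Z (Λ t r))
    (hK : ∀ t r, K t r = momentumIntegral w q r₁ 1 (Λ t r, r) - t * Λ t r)
    (hb : ∀ t r, b t r = (w r)⁻¹ * momentum (Λ t r - q r))
    (hu : ∀ t r, u t r = Complex.exp (Complex.I * K t r) * √(D t r) * Z (Λ t r)) :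
    deriv (fun t' => u t' r) t + (b t r : ℂ) * deriv (fun r' => u t r') r
      + (1 / 2 : ℂ) * deriv (fun r' => (b t r' : ℂ)) r * u t r
      = Complex.I * ((Λ t r : ℂ) - 2 * (q r : ℂ)) * u t r := by
  have ht := hΛ.hasDerivAt_comp_prodMk_const
  obtain ⟨hKt, hKr⟩ := wkb_phase_partials hw.continuousOn hq.continuousOn hqa hr hΛa ht hrd hinv hK
  have hphase : -Λ t r + b t r * (w r * momentum (Λ t r - q r)) = Λ t r - 2 * q r := by
    have hρ2 := momentum_sq (sub_nonneg.2 ((hqa r hr.le).trans hΛa.le))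
    rw [hb]
    field_simp [(hwpos r hr.le).ne']
    linear_combination hρ2
  have hfreq := wkb_frequency_transport hw.continuousOn hq.continuousOn hqa hwpos hr hΛa ht hrd
    hinv hb
  obtain ⟨Dt, Dr, b', hDt, hDr, hb', hdens⟩ :=
    wkb_continuity_equation hw hq hqa hwpos hr hΛa ht hrd hinv hDeq hb
  rw [hb'.ofReal_comp.deriv]
  exact_mod_cast transport_of_wkb_ansatz hu hKt hKr ht hrd hDt hDr hZ.hasDerivAt hD hphase hfreq
    hdens

theorem isOpen_setOf_lt_momentumIntegral (hw : ContinuousOn w (Ici r₁))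
    (hq : ContinuousOn q (Ici r₁)) (hqa : ∀ s, r₁ ≤ s → q s ≤ a) {l₁ : ℝ} (hl₁ : a < l₁) :
    IsOpen {p : ℝ × ℝ | 0 < p.1 ∧ r₁ < p.2 ∧ p.1 < momentumIntegral w q r₁ (-1) (l₁, p.2)} := by
  have hcont : ContinuousOn (fun p : ℝ × ℝ => p.1 - momentumIntegral w q r₁ (-1) (l₁, p.2))
      {p | r₁ < p.2} :=
    continuousOn_fst.sub ((continuousOn_momentumIntegral hw hq hqa (-1)).comp
      (continuous_const.prodMk continuous_snd).continuousOn fun p hp => ⟨hl₁, hp⟩)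
  have h := (isOpen_lt (continuous_const (y := (0 : ℝ))) continuous_fst).inter
    (hcont.isOpen_inter_preimage (isOpen_lt continuous_const continuous_snd) (isOpen_Iio (a := 0)))
  convert h using 1
  ext p
  simp [sub_neg]

theorem contDiffOn_wkb_wave (hw : ContDiffOn ℝ 1 w (Ici r₁)) (hq : ContDiffOn ℝ 1 q (Ici r₁))
    (hqa : ∀ s, r₁ ≤ s → q s ≤ a) (hwpos : ∀ s, r₁ ≤ s → 0 < w s)
    {K : ℝ → ℝ → ℝ} {u : ℝ → ℝ → ℂ} {Z : ℝ → ℂ} {Ω : Set (ℝ × ℝ)}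
    (hΛ : ContDiffOn ℝ 1 (fun p : ℝ × ℝ => Λ p.1 p.2) Ω)
    (hΩ : ∀ p ∈ Ω, a < Λ p.1 p.2 ∧ r₁ < p.2)
    (hDeq : ∀ p ∈ Ω, D p.1 p.2 = wkbDensity w q r₁ (Λ p.1 p.2, p.2))
    (hD : ∀ p ∈ Ω, 0 < D p.1 p.2) (hZ : ContDiff ℝ 1 Z)
    (hK : ∀ t r, K t r = momentumIntegral w q r₁ 1 (Λ t r, r) - t * Λ t r)
    (hu : ∀ t r, u t r = Complex.exp (Complex.I * K t r) * √(D t r) * Z (Λ t r)) :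
    ContDiffOn ℝ 1 (fun p : ℝ × ℝ => u p.1 p.2) Ω := by
  have hpair : ContDiffOn ℝ 1 (fun p : ℝ × ℝ => (Λ p.1 p.2, p.2)) Ω :=
    hΛ.prodMk contDiff_snd.contDiffOn
  have hK' : ContDiffOn ℝ 1 (fun p : ℝ × ℝ => K p.1 p.2) Ω := by
    simp only [hK]
    exact ((contDiffOn_momentumIntegral hw.continuousOn hq.continuousOn hqa 1).comp hpair hΩ).sub
      (contDiff_fst.contDiffOn.mul hΛ)
  have hS : ContDiffOn ℝ 1 (fun p : ℝ × ℝ => √(D p.1 p.2)) Ω :=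
    (((contDiffOn_wkbDensity hw hq hqa hwpos).comp hpair hΩ).sqrt fun p hp =>
      (hDeq p hp ▸ hD p hp).ne').congr fun p hp => by rw [hDeq p hp]; rfl
  simp only [hu]
  exact ((Complex.contDiff_exp.comp_contDiffOn (contDiffOn_const.mul
    (Complex.ofRealCLM.contDiff.comp_contDiffOn hK'))).mul
      (Complex.ofRealCLM.contDiff.comp_contDiffOn hS)).mul (hZ.comp_contDiffOn hΛ)

end WKB

end

theorem WKB_transport_equation_general
    (lam0 lam1 r1 c1 : ℝ)
    (hlam : lam0 < lam1) (hc1 : 0 < c1)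
    (w q : ℝ → ℝ)
    (hw : ContDiffOn ℝ 1 w (Set.Ici r1))
    (hwl : ∀ s, r1 ≤ s → c1 ≤ w s)
    (hq : ContDiffOn ℝ 1 q (Set.Ici r1))
    (hqu : ∀ s, r1 ≤ s → q s ≤ (lam0 + lam1) / 2)
    (T : ℝ → ℝ → ℝ)
    (hT : ∀ lam r, T lam r = ∫ s in r1..r, w s / Real.sqrt (2 * (lam - q s)))
    (Ωc : Set (ℝ × ℝ))
    (hΩc : Ωc = {p : ℝ × ℝ | 0 < p.1 ∧ r1 < p.2 ∧ p.1 < T lam1 p.2})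
    (lamc : ℝ → ℝ → ℝ)
    (hlamc : ∀ p ∈ Ωc, lam1 < lamc p.1 p.2 ∧ T (lamc p.1 p.2) p.2 = p.1)
    (hlamC1 : ContDiffOn ℝ 1 (fun p : ℝ × ℝ => lamc p.1 p.2) Ωc)
    (D : ℝ → ℝ → ℝ)
    (hD : ∀ p ∈ Ωc, HasDerivAt (fun r => lamc p.1 r) (D p.1 p.2) p.2 ∧ 0 < D p.1 p.2)
    (Z : ℝ → ℂ)
    (hZ : ContDiff ℝ 1 Z)
    (K1 : ℝ → ℝ → ℝ)
    (hK1 : ∀ t r, K1 t r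
      = (∫ s in r1..r, w s * Real.sqrt (2 * (lamc t r - q s))) - t * lamc t r)
    (bhat : ℝ → ℝ → ℝ)
    (hbhat : ∀ t r, bhat t r = (w r)⁻¹ * Real.sqrt (2 * (lamc t r - q r)))
    (u : ℝ → ℝ → ℂ)
    (hu : ∀ t r, u t r
      = Complex.exp (Complex.I * (K1 t r : ℂ))
          * (Real.sqrt (D t r) : ℂ) * Z (lamc t r)) :
    ContDiffOn ℝ 1 (fun p : ℝ × ℝ => u p.1 p.2) Ωc ∧
    ∀ p ∈ Ωc,
      deriv (fun t => u t p.2) p.1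
        + (bhat p.1 p.2 : ℂ) * deriv (fun r => u p.1 r) p.2
        + (1 / 2 : ℂ) * (deriv (fun r => bhat p.1 r) p.2 : ℂ) * u p.1 p.2
      = Complex.I * ((lamc p.1 p.2 : ℂ) - 2 * (q p.2 : ℂ)) * u p.1 p.2 := by
  have ha : (lam0 + lam1) / 2 < lam1 := by linarith
  have hwpos : ∀ s, r1 ≤ s → 0 < w s := fun s hs => hc1.trans_le (hwl s hs)
  have hTΦ : ∀ lam r, T lam r = momentumIntegral w q r1 (-1) (lam, r) := fun lam r => by
    simp [hT, momentumIntegral, momentum, div_eq_mul_inv]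
  have hKΦ : ∀ t r, K1 t r = momentumIntegral w q r1 1 (lamc t r, r) - t * lamc t r :=
    fun t r => by simp [hK1, momentumIntegral, momentum]
  have hΩo : IsOpen Ωc := by
    simpa only [hΩc, hTΦ] using
      isOpen_setOf_lt_momentumIntegral hw.continuousOn hq.continuousOn hqu ha
  have hmem : ∀ p ∈ Ωc, (lam0 + lam1) / 2 < lamc p.1 p.2 ∧ r1 < p.2 := fun p hp =>
    ⟨ha.trans (hlamc p hp).1, (hΩc ▸ hp).2.1⟩
  have hinv : ∀ p ∈ Ωc, ∀ᶠ p' in nhds p,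
      momentumIntegral w q r1 (-1) (lamc p'.1 p'.2, p'.2) = p'.1 := fun p hp =>
    (hΩo.eventually_mem hp).mono fun p' hp' => (hTΦ _ _).symm.trans (hlamc p' hp').2
  have hlamd : ∀ p ∈ Ωc, DifferentiableAt ℝ (fun p : ℝ × ℝ => lamc p.1 p.2) p := fun p hp =>
    (hlamC1.contDiffAt (hΩo.mem_nhds hp)).differentiableAt one_ne_zero
  have hDeq : ∀ p ∈ Ωc, D p.1 p.2 = wkbDensity w q r1 (lamc p.1 p.2, p.2) := fun p hp =>
    eq_wkbDensity_of_hasDerivAt hw.continuousOn hq.continuousOn hqu hwpos (hmem p hp).2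
      (hmem p hp).1 (hlamd p hp).hasDerivAt_comp_prodMk_const (hD p hp).1 (hinv p hp)
  refine ⟨contDiffOn_wkb_wave hw hq hqu hwpos hlamC1 hmem hDeq (fun p hp => (hD p hp).2) hZ hKΦ hu,
    fun p hp => ?_⟩
  exact wkb_transport_at hw hq hqu hwpos (hmem p hp).2 (hmem p hp).1 (hlamd p hp) (hD p hp).1
    (hD p hp).2 (hinv p hp) ((hΩo.eventually_mem hp).mono hDeq) (hZ.differentiable one_ne_zero _)
    hKΦ hbhat hu

/-- Fixed-angular-variable form of the evolution identity (3.20)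
for the comparison dynamics in the paper's Lemma 3.3: with the phase `K₁`, the
local propagation speed `b̂ = w(r)⁻¹√(2(λ_c−q(r)))` and the WKB wave
`u = e^{iK₁}(∂_rλ_c)^{1/2}Z(λ_c)`, the function `u` is `C¹` on `Ω_c` and satisfies
`∂_t u + b̂ ∂_r u + ½(∂_r b̂) u = i(λ_c − 2q(r)) u` on `Ω_c`. -/
theorem WKB_transport_equation
    (lam0 lam1 r1 c1 c2 m : ℝ)
    (hlam : lam0 < lam1) (hr1 : 1 ≤ r1) (hc1 : 0 < c1) (hc12 : c1 ≤ c2)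
    (hm : m ≤ (lam0 + lam1) / 2)
    (w q : ℝ → ℝ)
    (hw : ContDiffOn ℝ 1 w (Set.Ici r1))
    (hwl : ∀ s, r1 ≤ s → c1 ≤ w s) (hwu : ∀ s, r1 ≤ s → w s ≤ c2)
    (hq : ContDiffOn ℝ 1 q (Set.Ici r1))
    (hql : ∀ s, r1 ≤ s → m ≤ q s) (hqu : ∀ s, r1 ≤ s → q s ≤ (lam0 + lam1) / 2)
    (T : ℝ → ℝ → ℝ)
    (hT : ∀ lam r, T lam r = ∫ s in r1..r, w s / Real.sqrt (2 * (lam - q s)))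
    (Ωc : Set (ℝ × ℝ))
    (hΩc : Ωc = {p : ℝ × ℝ | 0 < p.1 ∧ r1 < p.2 ∧ p.1 < T lam1 p.2})
    (lamc : ℝ → ℝ → ℝ)
    (hlamc : ∀ p ∈ Ωc, lam1 < lamc p.1 p.2 ∧ T (lamc p.1 p.2) p.2 = p.1)
    (hlamC1 : ContDiffOn ℝ 1 (fun p : ℝ × ℝ => lamc p.1 p.2) Ωc)
    (D : ℝ → ℝ → ℝ)
    (hD : ∀ p ∈ Ωc, HasDerivAt (fun r => lamc p.1 r) (D p.1 p.2) p.2 ∧ 0 < D p.1 p.2)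
    (Z : ℝ → ℂ)
    (hZ : ContDiff ℝ 1 Z) (hZc : HasCompactSupport Z)
    (hZsupp : tsupport Z ⊆ Set.Ioi lam1)
    (K1 : ℝ → ℝ → ℝ)
    (hK1 : ∀ t r, K1 t r
      = (∫ s in r1..r, w s * Real.sqrt (2 * (lamc t r - q s))) - t * lamc t r)
    (bhat : ℝ → ℝ → ℝ)
    (hbhat : ∀ t r, bhat t r = (w r)⁻¹ * Real.sqrt (2 * (lamc t r - q r)))
    (u : ℝ → ℝ → ℂ)
    (hu : ∀ t r, u t r
      = Complex.exp (Complex.I * (K1 t r : ℂ))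
          * (Real.sqrt (D t r) : ℂ) * Z (lamc t r)) :
    ContDiffOn ℝ 1 (fun p : ℝ × ℝ => u p.1 p.2) Ωc ∧
    ∀ p ∈ Ωc,
      deriv (fun t => u t p.2) p.1
        + (bhat p.1 p.2 : ℂ) * deriv (fun r => u p.1 r) p.2
        + (1 / 2 : ℂ) * (deriv (fun r => bhat p.1 r) p.2 : ℂ) * u p.1 p.2
      = Complex.I * ((lamc p.1 p.2 : ℂ) - 2 * (q p.2 : ℂ)) * u p.1 p.2 :=
  WKB_transport_equation_general lam0 lam1 r1 c1 hlam hc1 w q hw hwl hq hqu T hT Ωc hΩc lamc hlamc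
    hlamC1 D hD Z hZ K1 hK1 bhat hbhat u hu
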